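/- Given a directed graph G and optimal sets S, T with ρ*(G) = ρ_G(S,T), if t satisfies sqrt(|S|/|T|)·(1−ε) ≤ t ≤ sqrt(|S|/|T|)·(1+ε) for 0 < ε < 1, then ρ*(G_t) ≥ (1−ε)·ρ*(G). -/

import Mathlib

/-!
Let `(S, T)` be optimal and `D = (|S|/t + t|T|)/2`, so that `ρ_{G_t}(S, T) = |E(S,T)|/D`.
By AM-GM, `D ≥ √(|S||T|)` with equality at the balancing weight `t = √(|S|/|T|)`; for `t` within
a factor `1 ± ε` of it, both `|S|/t` and `t|T|` are at most `√(|S||T|)/(1 - ε)`, hence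
`ρ*(G_t) ≥ ρ_{G_t}(S, T) ≥ (1 - ε) ρ_G(S, T) = (1 - ε) ρ*(G)`. The same AM-GM bound gives
`ρ_{G_t} ≤ ρ_G` everywhere, which keeps the supremum `ρ*(G_t)` finite.
-/

open Finset

/-- The set of edges of the directed graph `E` going from `S` to `T`. -/
def eST {V : Type*} [DecidableEq V] (E : Finset (V × V)) (S T : Finset V) :
    Finset (V × V) :=
  E.filter fun p => p.1 ∈ S ∧ p.2 ∈ T

/-- Directed density `ρ_G(S,T) = |E(S,T)| / sqrt(|S||T|)`. -/
noncomputable def dDen {V : Type*} [DecidableEq V] (E : Finset (V × V)) (S T : Finset V) : ℝ :=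
  ((eST E S T).card : ℝ) / Real.sqrt ((S.card : ℝ) * (T.card : ℝ))

/-- Density of `S^L ∪ T^R` in the reduction graph `G_t`:
`|E(S,T)| / ((|S|/t + t|T|)/2)`. -/
noncomputable def wDen {V : Type*} [DecidableEq V] (E : Finset (V × V)) (t : ℝ)
    (S T : Finset V) : ℝ :=
  ((eST E S T).card : ℝ) / (((S.card : ℝ) / t + t * (T.card : ℝ)) / 2)

/-- Optimum directed density `ρ*(G)`, over nonempty `S, T`. -/
noncomputable def rhoStar {V : Type*} [DecidableEq V] (E : Finset (V × V)) : ℝ :=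
  sSup {x : ℝ | ∃ S T : Finset V, S.Nonempty ∧ T.Nonempty ∧ x = dDen E S T}

/-- Optimum density `ρ*(G_t)` of the vertex-weighted reduction graph, over nonempty `S, T`. -/
noncomputable def rhoStarT {V : Type*} [DecidableEq V] (E : Finset (V × V)) (t : ℝ) : ℝ :=
  sSup {x : ℝ | ∃ S T : Finset V, S.Nonempty ∧ T.Nonempty ∧ x = wDen E t S T}

lemma sqrt_mul_le_div_add_mul_div_two {a b t : ℝ} (ha : 0 ≤ a) (hb : 0 ≤ b) (ht : 0 < t) :
    √(a * b) ≤ (a / t + t * b) / 2 := by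
  have hprod : a / t * (t * b) = a * b := by field_simp
  rw [Real.sqrt_le_iff]
  constructor
  · positivity
  · nlinarith [sq_nonneg (a / t - t * b)]

lemma sqrt_div_mul_self {a b : ℝ} (ha : 0 ≤ a) (hb : 0 ≤ b) : √(a / b) * b = √(a * b) := by
  rcases hb.eq_or_lt with rfl | hb
  · simp
  rw [Real.sqrt_div ha, Real.sqrt_mul ha]
  have hsq := Real.sq_sqrt hb.le
  have : 0 < √b := Real.sqrt_pos.2 hb
  field_simp
  rw [hsq]

lemma div_sqrt_div {a b : ℝ} (ha : 0 < a) (hb : 0 ≤ b) : a / √(a / b) = √(a * b) := by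
  rcases hb.eq_or_lt with rfl | hb
  · simp
  rw [Real.sqrt_div ha.le, Real.sqrt_mul ha.le]
  have := Real.sq_sqrt ha.le
  have : 0 < √b := Real.sqrt_pos.2 hb
  have : 0 < √a := Real.sqrt_pos.2 ha
  field_simp
  linarith

lemma div_add_mul_div_two_le {a b t ε : ℝ} (ha : 0 < a) (hb : 0 < b) (hε : ε < 1)
    (ht1 : √(a / b) * (1 - ε) ≤ t) (ht2 : t ≤ √(a / b) * (1 + ε)) :
    (a / t + t * b) / 2 ≤ √(a * b) / (1 - ε) := by
  have hε' : 0 < 1 - ε := by linarith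
  have hr : 0 < √(a / b) := Real.sqrt_pos.2 (div_pos ha hb)
  have hq : 0 ≤ √(a * b) := Real.sqrt_nonneg _
  have hleft : a / t ≤ √(a * b) / (1 - ε) := calc
    a / t ≤ a / (√(a / b) * (1 - ε)) := by gcongr
    _ = √(a * b) / (1 - ε) := by rw [← div_div, div_sqrt_div ha hb.le]
  have hright : t * b ≤ √(a * b) / (1 - ε) := calc
    t * b ≤ √(a / b) * (1 + ε) * b := by gcongr
    _ = √(a * b) * (1 + ε) := by rw [mul_right_comm, sqrt_div_mul_self ha.le hb.le]
    _ ≤ √(a * b) / (1 - ε) := by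
      rw [le_div_iff₀ hε']
      nlinarith [mul_nonneg hq (sq_nonneg ε)]
  linarith

section Density

variable {V : Type*} [DecidableEq V] {E : Finset (V × V)} {S T : Finset V}

lemma wDen_le_dDen {t : ℝ} (hS : S.Nonempty) (hT : T.Nonempty) (ht : 0 < t) :
    wDen E t S T ≤ dDen E S T := by
  have hST : (0 : ℝ) < #S * #T := by
    have := card_pos.2 hS; have := card_pos.2 hT; positivity
  exact div_le_div_of_nonneg_left (Nat.cast_nonneg _) (Real.sqrt_pos.2 hST)
    (sqrt_mul_le_div_add_mul_div_two (Nat.cast_nonneg _) (Nat.cast_nonneg _) ht)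

lemma one_sub_mul_dDen_le_wDen {t ε : ℝ} (hS : S.Nonempty) (hT : T.Nonempty) (hε : ε < 1)
    (ht1 : √((#S : ℝ) / #T) * (1 - ε) ≤ t) (ht2 : t ≤ √((#S : ℝ) / #T) * (1 + ε)) :
    (1 - ε) * dDen E S T ≤ wDen E t S T := by
  have hε' : 0 < 1 - ε := by linarith
  have hs : (0 : ℝ) < #S := by exact_mod_cast card_pos.2 hS
  have hu : (0 : ℝ) < #T := by exact_mod_cast card_pos.2 hT
  have hmean : 0 < ((#S : ℝ) / t + t * #T) / 2 := by
    have : 0 < t := (mul_pos (Real.sqrt_pos.2 (div_pos hs hu)) hε').trans_le ht1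
    positivity
  calc (1 - ε) * dDen E S T = (#(eST E S T) : ℝ) / (√((#S : ℝ) * #T) / (1 - ε)) := by
        rw [dDen, div_div_eq_mul_div]; ring
    _ ≤ wDen E t S T := div_le_div_of_nonneg_left (Nat.cast_nonneg _) hmean
        (div_add_mul_div_two_le hs hu hε ht1 ht2)

lemma rhoStar_eq_of_forall_dDen_le (hS : S.Nonempty) (hT : T.Nonempty)
    (hopt : ∀ S' T' : Finset V, S'.Nonempty → T'.Nonempty → dDen E S' T' ≤ dDen E S T) :
    rhoStar E = dDen E S T := by
  refine IsGreatest.csSup_eq ⟨⟨S, T, hS, hT, rfl⟩, ?_⟩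
  rintro x ⟨S', T', hS', hT', rfl⟩
  exact hopt S' T' hS' hT'

lemma wDen_le_rhoStarT {t : ℝ} (hS : S.Nonempty) (hT : T.Nonempty)
    (hopt : ∀ S' T' : Finset V, S'.Nonempty → T'.Nonempty → dDen E S' T' ≤ dDen E S T)
    (ht : 0 < t) : wDen E t S T ≤ rhoStarT E t := by
  refine le_csSup ⟨dDen E S T, ?_⟩ ⟨S, T, hS, hT, rfl⟩
  rintro x ⟨S', T', hS', hT', rfl⟩
  exact (wDen_le_dDen hS' hT' ht).trans (hopt S' T' hS' hT')

end Density

theorem stmt3_general {V : Type*} [DecidableEq V]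
    (E : Finset (V × V)) (S T : Finset V) (hS : S.Nonempty) (hT : T.Nonempty)
    (hopt : ∀ S' T' : Finset V, S'.Nonempty → T'.Nonempty → dDen E S' T' ≤ dDen E S T)
    (ε t : ℝ) (hε1 : ε < 1)
    (ht1 : Real.sqrt ((S.card : ℝ) / (T.card : ℝ)) * (1 - ε) ≤ t)
    (ht2 : t ≤ Real.sqrt ((S.card : ℝ) / (T.card : ℝ)) * (1 + ε)) :
    (1 - ε) * rhoStar E ≤ rhoStarT E t := by
  have hs : (0 : ℝ) < #S := by exact_mod_cast card_pos.2 hS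
  have hu : (0 : ℝ) < #T := by exact_mod_cast card_pos.2 hT
  have ht : 0 < t := (mul_pos (Real.sqrt_pos.2 (div_pos hs hu)) (sub_pos.2 hε1)).trans_le ht1
  calc (1 - ε) * rhoStar E = (1 - ε) * dDen E S T := by
        rw [rhoStar_eq_of_forall_dDen_le hS hT hopt]
    _ ≤ wDen E t S T := one_sub_mul_dDen_le_wDen hS hT hε1 ht1 ht2
    _ ≤ rhoStarT E t := wDen_le_rhoStarT hS hT hopt ht

/-- If `(S,T)` achieves the optimum directed density and
`sqrt(|S|/|T|)·(1−ε) ≤ t ≤ sqrt(|S|/|T|)·(1+ε)` with `0 < ε < 1`, then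
`ρ*(G_t) ≥ (1−ε)·ρ*(G)`. -/
theorem stmt3 {V : Type*} [Fintype V] [DecidableEq V]
    (E : Finset (V × V)) (S T : Finset V) (hS : S.Nonempty) (hT : T.Nonempty)
    (hopt : ∀ S' T' : Finset V, S'.Nonempty → T'.Nonempty → dDen E S' T' ≤ dDen E S T)
    (ε t : ℝ) (hε0 : 0 < ε) (hε1 : ε < 1)
    (ht1 : Real.sqrt ((S.card : ℝ) / (T.card : ℝ)) * (1 - ε) ≤ t)
    (ht2 : t ≤ Real.sqrt ((S.card : ℝ) / (T.card : ℝ)) * (1 + ε)) :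
    (1 - ε) * rhoStar E ≤ rhoStarT E t :=
  stmt3_general E S T hS hT hopt ε t hε1 ht1 ht2
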